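/- Let $\tau_{\mathcal{A}}$ be the $k$-algebra automorphism of $\mathcal{A} = k[t, t^{-1}, (1-t)^{-1}]$ determined by $\tau_{\mathcal{A}}(t) = 1-t$. Then for $a \in \mathcal{A}$: $\tau_{\mathcal{A}}(a) = a$ if and only if $a \in k[t(1-t), (t(1-t))^{-1}]$, and $\tau_{\mathcal{A}}(a) = -a$ if and only if $a \in (2t-1)\,k[t(1-t), (t(1-t))^{-1}]$. -/

import Mathlib

/-!
Put `u = 2t - 1` and `s = t(1 - t)`. Since `u² = 1 - 4s` and `2` is invertible, every element of
`𝒜` can be written `b + u c` with `b, c ∈ k[s, s⁻¹]`. The automorphism `τ` fixes `s` and sends `u`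
to `-u`, so `τ(b + u c) = b - u c`; comparing with `±(b + u c)` and cancelling `2` (and `u`, in the
field `k(t)`) forces `c = 0`, resp. `b = 0`.
-/

namespace Subalgebra

variable {k R : Type*} [CommSemiring k] [CommRing R] [Algebra k R]

def quadExt (B : Subalgebra k R) (u : R) (hu : u * u ∈ B) : Subalgebra k R where
  carrier := {x | ∃ b ∈ B, ∃ c ∈ B, x = b + u * c}
  one_mem' := ⟨1, B.one_mem, 0, B.zero_mem, by ring⟩
  zero_mem' := ⟨0, B.zero_mem, 0, B.zero_mem, by ring⟩
  add_mem' := by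
    rintro x y ⟨b, hb, c, hc, rfl⟩ ⟨b', hb', c', hc', rfl⟩
    exact ⟨b + b', B.add_mem hb hb', c + c', B.add_mem hc hc', by ring⟩
  mul_mem' := by
    rintro x y ⟨b, hb, c, hc, rfl⟩ ⟨b', hb', c', hc', rfl⟩
    exact ⟨b * b' + (u * u) * (c * c'),
      B.add_mem (B.mul_mem hb hb') (B.mul_mem hu (B.mul_mem hc hc')),
      b * c' + c * b', B.add_mem (B.mul_mem hb hc') (B.mul_mem hc hb'), by ring⟩
  algebraMap_mem' r := ⟨algebraMap k R r, B.algebraMap_mem r, 0, B.zero_mem, by ring⟩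

section Involution

variable {B : Subalgebra k R} {u : R} {σ : R →ₐ[k] R}

theorem map_add_mul_eq_sub_mul (hσB : ∀ x ∈ B, σ x = x) (hσu : σ u = -u) {b c : R}
    (hb : b ∈ B) (hc : c ∈ B) : σ (b + u * c) = b - u * c := by
  rw [map_add, map_mul, hσB b hb, hσB c hc, hσu]
  ring

theorem map_eq_self_iff_mem_of_mem_quadExt [NoZeroDivisors R] (hσB : ∀ x ∈ B, σ x = x)
    (hσu : σ u = -u) (h2 : (2 : R) ≠ 0) (hu0 : u ≠ 0) {hu : u * u ∈ B} {a : R}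
    (ha : a ∈ B.quadExt u hu) :
    σ a = a ↔ a ∈ B := by
  refine ⟨fun h => ?_, hσB a⟩
  obtain ⟨b, hb, c, hc, rfl⟩ := ha
  rw [map_add_mul_eq_sub_mul hσB hσu hb hc] at h
  have hc0 : 2 * (u * c) = 0 := by linear_combination -h
  simp only [mul_eq_zero, h2, hu0, false_or] at hc0
  simpa [hc0] using hb

theorem map_eq_neg_iff_of_mem_quadExt [NoZeroDivisors R] (hσB : ∀ x ∈ B, σ x = x)
    (hσu : σ u = -u) (h2 : (2 : R) ≠ 0) {hu : u * u ∈ B} {a : R} (ha : a ∈ B.quadExt u hu) :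
    σ a = -a ↔ ∃ b ∈ B, a = u * b := by
  constructor
  · obtain ⟨b, hb, c, hc, rfl⟩ := ha
    intro h
    rw [map_add_mul_eq_sub_mul hσB hσu hb hc] at h
    have hb0 : 2 * b = 0 := by linear_combination h
    simp only [mul_eq_zero, h2, false_or] at hb0
    exact ⟨c, hc, by rw [hb0, zero_add]⟩
  · rintro ⟨b, hb, rfl⟩
    rw [map_mul, hσu, hσB b hb, neg_mul]

end Involution

end Subalgebra

namespace RatFunc

variable {k : Type*} [Field k]

theorem ofNat_two_ne_zero (h2 : (2 : k) ≠ 0) : (2 : RatFunc k) ≠ 0 := by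
  simpa only [map_ofNat] using (map_ne_zero (C : k →+* RatFunc k)).2 h2

theorem X_sub_C_ne_zero (a : k) : (X : RatFunc k) - C a ≠ 0 := by
  rw [← algebraMap_X, ← algebraMap_C, ← map_sub]
  exact algebraMap_ne_zero (Polynomial.X_sub_C_ne_zero a)

theorem one_sub_X_ne_zero : (1 - X : RatFunc k) ≠ 0 := by
  simpa [neg_sub] using neg_ne_zero.2 (X_sub_C_ne_zero (1 : k))

theorem two_mul_X_sub_one_ne_zero (h2 : (2 : k) ≠ 0) : (2 * X - 1 : RatFunc k) ≠ 0 := by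
  have h : (2 * X - 1 : RatFunc k) = C 2 * (X - C 2⁻¹) := by
    rw [mul_sub, ← map_mul, mul_inv_cancel₀ h2, map_one, map_ofNat]
  rw [h]
  exact mul_ne_zero ((map_ne_zero C).2 h2) (X_sub_C_ne_zero _)

theorem two_mul_X_sub_one_mul_self_mem :
    (2 * X - 1) * (2 * X - 1) ∈ Algebra.adjoin k {X * (1 - X), (X * (1 - X) : RatFunc k)⁻¹} := by
  rw [show (2 * X - 1) * (2 * X - 1) = 1 - C 4 * (X * (1 - X) : RatFunc k) by
    rw [map_ofNat]; ring]
  exact sub_mem (one_mem _) (mul_mem (algebraMap_mem _ 4) (Algebra.subset_adjoin (by simp)))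

/-- With `u = 2X - 1` and `s = X(1 - X)`: `X = (1 + u)/2`, `X⁻¹ = (1 - u)/(2s)` and
`(1 - X)⁻¹ = (1 + u)/(2s)`. -/
theorem adjoin_le_quadExt (h2 : (2 : k) ≠ 0) :
    Algebra.adjoin k {X, X⁻¹, (1 - X : RatFunc k)⁻¹} ≤
      (Algebra.adjoin k {X * (1 - X), (X * (1 - X) : RatFunc k)⁻¹}).quadExt (2 * X - 1)
        two_mul_X_sub_one_mul_self_mem := by
  set B := Algebra.adjoin k {X * (1 - X), (X * (1 - X) : RatFunc k)⁻¹}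
  have h2' := ofNat_two_ne_zero h2
  have hX := X_ne_zero (K := k)
  have hX1 := one_sub_X_ne_zero (k := k)
  have half_mem : (2 : RatFunc k)⁻¹ ∈ B := by
    simpa only [map_inv₀, map_ofNat] using B.algebraMap_mem 2⁻¹
  have hs : (2 : RatFunc k)⁻¹ * (X * (1 - X))⁻¹ ∈ B :=
    mul_mem half_mem (Algebra.subset_adjoin (by simp))
  refine Algebra.adjoin_le ?_
  rintro x (rfl | rfl | rfl)
  · exact ⟨_, half_mem, _, half_mem, by field_simp; ring⟩
  · exact ⟨_, hs, _, neg_mem hs, by field_simp; ring⟩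
  · exact ⟨_, hs, _, hs, by field_simp; ring⟩

theorem map_eq_self_of_mem_adjoin {τ : RatFunc k →ₐ[k] RatFunc k} (hτ : τ X = 1 - X)
    {x : RatFunc k} (hx : x ∈ Algebra.adjoin k {X * (1 - X), (X * (1 - X) : RatFunc k)⁻¹}) :
    τ x = x := by
  have hs : τ (X * (1 - X)) = X * (1 - X) := by
    rw [map_mul, map_sub, map_one, hτ, sub_sub_cancel, mul_comm]
  refine (AlgHom.eqOn_adjoin_iff (ψ := AlgHom.id k _)).2 ?_ hx
  rintro y (rfl | rfl)
  · exact hs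
  · rw [map_inv₀, hs, AlgHom.id_apply]

theorem map_two_mul_X_sub_one {τ : RatFunc k →ₐ[k] RatFunc k} (hτ : τ X = 1 - X) :
    τ (2 * X - 1) = -(2 * X - 1) := by
  rw [map_sub, map_mul, map_ofNat, map_one, hτ]
  ring

end RatFunc

theorem stmt3_general (k : Type*) [Field k] (h2 : (2:k) ≠ 0)
    (τ : RatFunc k →ₐ[k] RatFunc k)
    (hτ : τ RatFunc.X = 1 - RatFunc.X) :
    let t : RatFunc k := RatFunc.X
    let 𝒜 : Subalgebra k (RatFunc k) := Algebra.adjoin k {t, t⁻¹, (1-t)⁻¹}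
    let B : Subalgebra k (RatFunc k) := Algebra.adjoin k {t*(1-t), (t*(1-t))⁻¹}
    ∀ a ∈ 𝒜, (τ a = a ↔ a ∈ B) ∧ (τ a = -a ↔ ∃ b ∈ B, a = (2*t-1) * b) := by
  intro t 𝒜 B a ha
  have hτB : ∀ x ∈ B, τ x = x := fun _ => RatFunc.map_eq_self_of_mem_adjoin hτ
  have hτu := RatFunc.map_two_mul_X_sub_one hτ
  have ha' := RatFunc.adjoin_le_quadExt h2 ha
  have h2' := RatFunc.ofNat_two_ne_zero h2
  exact ⟨Subalgebra.map_eq_self_iff_mem_of_mem_quadExt hτB hτu h2'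
      (RatFunc.two_mul_X_sub_one_ne_zero h2) ha',
    Subalgebra.map_eq_neg_iff_of_mem_quadExt hτB hτu h2' ha'⟩

/-- For the automorphism τ of 𝒜 = k[t, t⁻¹, (1-t)⁻¹] with τ(t) = 1-t:
τ(a) = a iff a ∈ k[t(1-t), (t(1-t))⁻¹], and τ(a) = -a iff a lies in
(2t-1)·k[t(1-t), (t(1-t))⁻¹]. -/
theorem stmt3 (k : Type*) [Field k] (h2 : (2:k) ≠ 0) (h3 : (3:k) ≠ 0)
    (τ : RatFunc k →ₐ[k] RatFunc k)
    (hτ : τ RatFunc.X = 1 - RatFunc.X) :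
    let t : RatFunc k := RatFunc.X
    let 𝒜 : Subalgebra k (RatFunc k) := Algebra.adjoin k {t, t⁻¹, (1-t)⁻¹}
    let B : Subalgebra k (RatFunc k) := Algebra.adjoin k {t*(1-t), (t*(1-t))⁻¹}
    ∀ a ∈ 𝒜, (τ a = a ↔ a ∈ B) ∧ (τ a = -a ↔ ∃ b ∈ B, a = (2*t-1) * b) :=
  stmt3_general k h2 τ hτ
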